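/- arXiv:2208.13130 — 7 statements merged into one kernel-verified Lean document; each statement's English description precedes it below -/
import Mathlib

section
/- Under the stated assumptions, the function Ĝ has simple poles at p₁ and at −p₁ − πi with residues r₂ and r₁ respectively; precisely, (w − p₁)·Ĝ(w) tends to r₂ = sinh(p₁ − iΦ)/cosh p₁ as w → p₁ (w ≠ p₁), and (w − (−p₁ − πi))·Ĝ(w) tends to r₁ = −sinh(p₁ + iΦ)/cosh p₁ as w → −p₁ − πi (w ≠ −p₁ − πi). -/
open Complex Filter Topology
open scoped Real

/-!
Both points are simple zeros of the denominator `D w = iω sinh w + k`: `p₁` by its choice, and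
`-p₁ - πi` because `sinh (-z - πi) = sinh z`. At a simple zero `a` of `D` the residue of `N / D` is
`N a / D' a = sinh (a - iΦ) / cosh a`; at `a = -p₁ - πi` the same reflection turns this into
`sinh (p₁ + iΦ) / (-cosh p₁)`.
-/

theorem tendsto_sub_mul_div_of_hasDerivAt {𝕜 : Type*} [NontriviallyNormedField 𝕜]
    {f g : 𝕜 → 𝕜} {a g' : 𝕜} (hf : ContinuousAt f a) (hg : HasDerivAt g g' a)
    (hga : g a = 0) (hg' : g' ≠ 0) :
    Tendsto (fun w => (w - a) * (f w / g w)) (𝓝[≠] a) (𝓝 (f a / g')) := by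
  have hslope := (hasDerivAt_iff_tendsto_slope.mp hg).inv₀ hg'
  rw [div_eq_mul_inv]
  refine ((hf.tendsto.mono_left nhdsWithin_le_nhds).mul hslope).congr fun w => ?_
  rw [slope_def_field, hga, sub_zero, inv_div]
  ring

namespace Complex

theorem sinh_neg_sub_pi_mul_I (z : ℂ) : sinh (-z - π * I) = sinh z := by
  rw [← neg_add', sinh_neg, sinh_add_pi_mul_I, neg_neg]

theorem cosh_neg_sub_pi_mul_I (z : ℂ) : cosh (-z - π * I) = -cosh z := by
  rw [← neg_add', cosh_neg, cosh_add_pi_mul_I]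

theorem tendsto_sub_mul_sinh_sub_div_sinh_add {b k c a : ℂ} (hb : b ≠ 0)
    (ha : b * sinh a + k = 0) (hca : cosh a ≠ 0) :
    Tendsto (fun w => (w - a) * (b * sinh (w - c) / (b * sinh w + k))) (𝓝[≠] a)
      (𝓝 (sinh (a - c) / cosh a)) := by
  have hN : Continuous fun w => b * sinh (w - c) := by fun_prop
  have hD : HasDerivAt (fun w => b * sinh w + k) (b * cosh a) a :=
    ((hasDerivAt_sinh a).const_mul b).add_const k
  simpa only [mul_div_mul_left _ _ hb] using
    tendsto_sub_mul_div_of_hasDerivAt hN.continuousAt hD ha (mul_ne_zero hb hca)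

end Complex

theorem residues_of_G_at_p1_and_minus_p1_minus_pi_i_general
    (ω : ℂ) (hω : 0 < ω.im) (k : ℝ)
    (Φ : ℝ)
    (p₁ : ℂ) (hp : Complex.sinh p₁ = I * k / ω) (hc : Complex.cosh p₁ ≠ 0)
    (G : ℂ → ℂ)
    (hG : ∀ w : ℂ, G w = (I * ω * Complex.sinh (w - I * Φ)) / (I * ω * Complex.sinh w + k)) :
    Tendsto (fun w => (w - p₁) * G w) (𝓝[≠] p₁)
      (𝓝 (Complex.sinh (p₁ - I * Φ) / Complex.cosh p₁)) ∧
    Tendsto (fun w => (w - (-p₁ - Real.pi * I)) * G w) (𝓝[≠] (-p₁ - Real.pi * I))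
      (𝓝 (-Complex.sinh (p₁ + I * Φ) / Complex.cosh p₁)) := by
  obtain rfl : G = _ := funext hG
  have hω₀ : ω ≠ 0 := fun h => by simp [h] at hω
  have hb : I * ω ≠ 0 := mul_ne_zero I_ne_zero hω₀
  have hp₁ : I * ω * sinh p₁ + k = 0 := by
    rw [hp]
    field_simp
    simp
  refine ⟨tendsto_sub_mul_sinh_sub_div_sinh_add hb hp₁ hc, ?_⟩
  have hq : I * ω * sinh (-p₁ - π * I) + k = 0 := by rwa [sinh_neg_sub_pi_mul_I]
  have hcq : cosh (-p₁ - π * I) ≠ 0 := by rwa [cosh_neg_sub_pi_mul_I, neg_ne_zero]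
  have hres : sinh (-p₁ - π * I - I * Φ) / cosh (-p₁ - π * I) = -sinh (p₁ + I * Φ) / cosh p₁ := by
    rw [show -p₁ - π * I - I * Φ = -(p₁ + I * Φ) - π * I by ring, sinh_neg_sub_pi_mul_I,
      cosh_neg_sub_pi_mul_I, div_neg, neg_div]
  exact hres ▸ tendsto_sub_mul_sinh_sub_div_sinh_add hb hq hcq

theorem residues_of_G_at_p1_and_minus_p1_minus_pi_i
    (ω : ℂ) (hω : 0 < ω.im) (k : ℝ) (hk : 0 < k)
    (Φ : ℝ) (hΦ : Real.pi < Φ ∧ Φ < 2 * Real.pi)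
    (p₁ : ℂ) (hp : Complex.sinh p₁ = I * k / ω) (hc : Complex.cosh p₁ ≠ 0)
    (G : ℂ → ℂ)
    (hG : ∀ w : ℂ, G w = (I * ω * Complex.sinh (w - I * Φ)) / (I * ω * Complex.sinh w + k)) :
    Tendsto (fun w => (w - p₁) * G w) (𝓝[≠] p₁)
      (𝓝 (Complex.sinh (p₁ - I * Φ) / Complex.cosh p₁)) ∧
    Tendsto (fun w => (w - (-p₁ - Real.pi * I)) * G w) (𝓝[≠] (-p₁ - Real.pi * I))
      (𝓝 (-Complex.sinh (p₁ + I * Φ) / Complex.cosh p₁)) :=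
  residues_of_G_at_p1_and_minus_p1_minus_pi_i_general ω hω k Φ p₁ hp hc G hG
end

section
/- Under the stated assumptions, there exist constants C > 0 and R > 0 such that for every w ∈ ℂ: if Re w ≥ R then both denominators iω·sinh w + k and iω·sinh(w + 2iΦ) + k are nonzero and |Ĝ₂(w) + 2i·sin Φ| ≤ C·e^{−Re w}, and if Re w ≤ −R then both denominators are nonzero and |Ĝ₂(w) − 2i·sin Φ| ≤ C·e^{Re w}. (Asymptotics Ĝ₂(w) = ∓2i·sin Φ·(1 + O(e^{∓Re w})) as Re w → ±∞, uniformly with respect to Im w.) -/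
/-!
For `Re w → +∞` the quotient `α sinh (w - b) / (α sinh w + c)` with `b` purely imaginary is
`exp (-b) + O(exp (-Re w))` uniformly in `Im w`: numerator minus `exp (-b)` times denominator is
`-(α sinh b · exp (-w) + c exp (-b))`, which stays bounded, while the denominator grows like
`‖α‖ exp (Re w) / 2`. Replacing `(α, b, w)` by `(-α, -b, -w)` gives `exp b` as `Re w → -∞`.
The reflected point `z = -w + πi - 2iΦ` has `Re z = -Re w` and `sinh z = sinh (w + 2iΦ)`, so
`Ĝ₂ w = Ĝ w - Ĝ z` tends to `exp (∓iΦ) - exp (±iΦ) = ∓2i sin Φ`.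
-/

open Complex

namespace Complex

lemma half_sub_exp_neg_le_norm_sinh (w : ℂ) :
    (Real.exp w.re - Real.exp (-w.re)) / 2 ≤ ‖sinh w‖ := by
  have h := norm_sub_norm_le (exp w) (exp (-w))
  rw [norm_exp, norm_exp, neg_re, ← two_sinh, norm_mul, Complex.norm_two] at h
  linarith

lemma norm_sinh_le_one_of_re_eq_zero {b : ℂ} (hb : b.re = 0) : ‖sinh b‖ ≤ 1 := by
  have h := norm_sub_le (exp b) (exp (-b))
  rw [norm_exp, norm_exp, neg_re, hb, neg_zero, Real.exp_zero, ← two_sinh, norm_mul,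
    Complex.norm_two] at h
  linarith

lemma mul_sinh_sub_sub_exp_neg_mul (α c b w : ℂ) :
    α * sinh (w - b) - exp (-b) * (α * sinh w + c) =
      -(α * sinh b * exp (-w) + c * exp (-b)) := by
  simp only [sinh, sub_eq_add_neg, neg_add, exp_add, neg_neg]
  field_simp
  ring

variable {α c b w : ℂ}

lemma norm_mul_sinh_add_ge (hα : α ≠ 0) (hw : 2 + 4 * ‖c‖ / ‖α‖ ≤ Real.exp w.re) :
    ‖α‖ * Real.exp w.re / 4 ≤ ‖α * sinh w + c‖ := by
  have hα' : 0 < ‖α‖ := norm_pos_iff.mpr hα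
  have hc : 4 * ‖c‖ ≤ (Real.exp w.re - 2) * ‖α‖ := (div_le_iff₀ hα').mp (by linarith)
  have hexp : Real.exp (-w.re) ≤ 1 := by
    rw [Real.exp_neg]
    exact inv_le_one_of_one_le₀ (by linarith [div_nonneg (by positivity : 0 ≤ 4 * ‖c‖) hα'.le])
  have hsinh := mul_le_mul_of_nonneg_left (half_sub_exp_neg_le_norm_sinh w) hα'.le
  have htri : ‖α * sinh w‖ ≤ ‖α * sinh w + c‖ + ‖c‖ := norm_le_add_norm_add _ _
  rw [norm_mul] at htri
  nlinarith

lemma norm_mul_sinh_mul_exp_add_le (hb : b.re = 0) :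
    ‖α * sinh b * exp (-w) + c * exp (-b)‖ ≤ ‖α‖ * Real.exp (-w.re) + ‖c‖ := by
  refine (norm_add_le _ _).trans (add_le_add ?_ ?_)
  · rw [norm_mul, norm_mul, norm_exp, neg_re]
    gcongr
    exact mul_le_of_le_one_right (norm_nonneg α) (norm_sinh_le_one_of_re_eq_zero hb)
  · rw [norm_mul, norm_exp, neg_re, hb, neg_zero, Real.exp_zero, mul_one]

lemma norm_mul_sinh_sub_div_sub_exp_neg_le (hα : α ≠ 0) (hb : b.re = 0)
    (hw : 2 + 4 * ‖c‖ / ‖α‖ ≤ w.re) :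
    α * sinh w + c ≠ 0 ∧
      ‖α * sinh (w - b) / (α * sinh w + c) - exp (-b)‖ ≤
        4 * (‖α‖ + ‖c‖) / ‖α‖ * Real.exp (-w.re) := by
  have hα' : 0 < ‖α‖ := norm_pos_iff.mpr hα
  have hden := norm_mul_sinh_add_ge hα (hw.trans ((le_add_of_nonneg_right zero_le_one).trans
    (Real.add_one_le_exp w.re)))
  have hden' : 0 < ‖α * sinh w + c‖ := lt_of_lt_of_le (by positivity) hden
  have hne : α * sinh w + c ≠ 0 := norm_pos_iff.mp hden'
  have hexp : Real.exp (-w.re) ≤ 1 := Real.exp_le_one_iff.mpr (by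
    linarith [div_nonneg (by positivity : 0 ≤ 4 * ‖c‖) hα'.le])
  refine ⟨hne, ?_⟩
  rw [div_sub' hne, mul_comm _ (exp (-b)), mul_sinh_sub_sub_exp_neg_mul, norm_div, norm_neg,
    div_le_iff₀ hden']
  calc ‖α * sinh b * exp (-w) + c * exp (-b)‖ ≤ ‖α‖ * Real.exp (-w.re) + ‖c‖ :=
        norm_mul_sinh_mul_exp_add_le hb
    _ ≤ ‖α‖ + ‖c‖ := by gcongr; exact mul_le_of_le_one_right hα'.le hexp
    _ = 4 * (‖α‖ + ‖c‖) / ‖α‖ * Real.exp (-w.re) * (‖α‖ * Real.exp w.re / 4) := by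
        rw [Real.exp_neg]; field_simp
    _ ≤ _ := by gcongr

lemma norm_mul_sinh_sub_div_sub_exp_le (hα : α ≠ 0) (hb : b.re = 0)
    (hw : w.re ≤ -(2 + 4 * ‖c‖ / ‖α‖)) :
    α * sinh w + c ≠ 0 ∧
      ‖α * sinh (w - b) / (α * sinh w + c) - exp b‖ ≤
        4 * (‖α‖ + ‖c‖) / ‖α‖ * Real.exp w.re := by
  have h := norm_mul_sinh_sub_div_sub_exp_neg_le (c := c) (b := -b) (w := -w)
    (neg_ne_zero.mpr hα) (by rwa [neg_re, neg_eq_zero]) (by rw [norm_neg, neg_re]; linarith)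
  rw [show -w - -b = -(w - b) by ring] at h
  simpa only [sinh_neg, neg_mul_neg, neg_re, neg_neg, norm_neg] using h

lemma exists_norm_mul_sinh_sub_div_sub_exp_le (hα : α ≠ 0) (hb : b.re = 0) :
    ∃ K > (0 : ℝ), ∃ R > (0 : ℝ), ∀ w : ℂ,
      (R ≤ w.re → α * sinh w + c ≠ 0 ∧
        ‖α * sinh (w - b) / (α * sinh w + c) - exp (-b)‖ ≤ K * Real.exp (-w.re)) ∧
      (w.re ≤ -R → α * sinh w + c ≠ 0 ∧
        ‖α * sinh (w - b) / (α * sinh w + c) - exp b‖ ≤ K * Real.exp w.re) := by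
  have hα' : 0 < ‖α‖ := norm_pos_iff.mpr hα
  exact ⟨4 * (‖α‖ + ‖c‖) / ‖α‖, by positivity, 2 + 4 * ‖c‖ / ‖α‖, by positivity, fun w =>
    ⟨norm_mul_sinh_sub_div_sub_exp_neg_le hα hb, norm_mul_sinh_sub_div_sub_exp_le hα hb⟩⟩

end Complex

theorem asymptotics_of_G2_at_infinity_general
    (ω : ℂ) (hω : 0 < ω.im) (k : ℝ)
    (Φ : ℝ)
    (G G₂ : ℂ → ℂ)
    (hG : ∀ w : ℂ, G w = (I * ω * Complex.sinh (w - I * Φ)) / (I * ω * Complex.sinh w + k))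
    (hG₂ : ∀ w : ℂ, G₂ w = G w - G (-w + Real.pi * I - 2 * I * Φ)) :
    ∃ C > (0 : ℝ), ∃ R > (0 : ℝ), ∀ w : ℂ,
      (R ≤ w.re → (I * ω * Complex.sinh w + k ≠ 0 ∧
        I * ω * Complex.sinh (w + 2 * I * Φ) + k ≠ 0) ∧
        ‖G₂ w + 2 * I * Real.sin Φ‖ ≤ C * Real.exp (-w.re)) ∧
      (w.re ≤ -R → (I * ω * Complex.sinh w + k ≠ 0 ∧
        I * ω * Complex.sinh (w + 2 * I * Φ) + k ≠ 0) ∧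
        ‖G₂ w - 2 * I * Real.sin Φ‖ ≤ C * Real.exp w.re) := by
  have hα : I * ω ≠ 0 := mul_ne_zero I_ne_zero (by rintro rfl; simp at hω)
  obtain ⟨K, hK, R, hR, hG_asymp⟩ :=
    exists_norm_mul_sinh_sub_div_sub_exp_le (c := k) hα (b := I * Φ) (by simp)
  simp only [← hG] at hG_asymp
  have hsin : 2 * I * Real.sin Φ = exp (I * Φ) - exp (-(I * Φ)) := by
    rw [← two_sinh, mul_comm I, sinh_mul_I, ofReal_sin]; ring
  refine ⟨2 * K, by positivity, R, hR, fun w => ?_⟩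
  rw [hG₂, hsin]
  set z := -w + Real.pi * I - 2 * I * Φ with hz
  have hz_re : z.re = -w.re := by simp [hz]
  have hsinh_z : sinh (w + 2 * I * Φ) = sinh z := by
    rw [hz, show -w + Real.pi * I - 2 * I * Φ = -(w + 2 * I * Φ) + Real.pi * I by ring,
      sinh_add_pi_mul_I, sinh_neg, neg_neg]
  rw [hsinh_z]
  constructor
  · intro hw
    obtain ⟨hw₀, hw_le⟩ := (hG_asymp w).1 hw
    obtain ⟨hz₀, hz_le⟩ := (hG_asymp z).2 (by linarith)
    refine ⟨⟨hw₀, hz₀⟩, ?_⟩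
    rw [hz_re] at hz_le
    calc _ = ‖(G w - exp (-(I * Φ))) - (G z - exp (I * Φ))‖ := by congr 1; ring
      _ ≤ _ := (norm_sub_le_of_le hw_le hz_le).trans_eq (by ring)
  · intro hw
    obtain ⟨hw₀, hw_le⟩ := (hG_asymp w).2 hw
    obtain ⟨hz₀, hz_le⟩ := (hG_asymp z).1 (by linarith)
    refine ⟨⟨hw₀, hz₀⟩, ?_⟩
    rw [hz_re, neg_neg] at hz_le
    calc _ = ‖(G w - exp (I * Φ)) - (G z - exp (-(I * Φ)))‖ := by congr 1; ring
      _ ≤ _ := (norm_sub_le_of_le hw_le hz_le).trans_eq (by ring)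

theorem asymptotics_of_G2_at_infinity
    (ω : ℂ) (hω : 0 < ω.im) (k : ℝ) (hk : 0 < k)
    (Φ : ℝ) (hΦ : Real.pi < Φ ∧ Φ < 2 * Real.pi)
    (G G₂ : ℂ → ℂ)
    (hG : ∀ w : ℂ, G w = (I * ω * Complex.sinh (w - I * Φ)) / (I * ω * Complex.sinh w + k))
    (hG₂ : ∀ w : ℂ, G₂ w = G w - G (-w + Real.pi * I - 2 * I * Φ)) :
    ∃ C > (0 : ℝ), ∃ R > (0 : ℝ), ∀ w : ℂ,
      (R ≤ w.re → (I * ω * Complex.sinh w + k ≠ 0 ∧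
        I * ω * Complex.sinh (w + 2 * I * Φ) + k ≠ 0) ∧
        ‖G₂ w + 2 * I * Real.sin Φ‖ ≤ C * Real.exp (-w.re)) ∧
      (w.re ≤ -R → (I * ω * Complex.sinh w + k ≠ 0 ∧
        I * ω * Complex.sinh (w + 2 * I * Φ) + k ≠ 0) ∧
        ‖G₂ w - 2 * I * Real.sin Φ‖ ≤ C * Real.exp w.re) :=
  asymptotics_of_G2_at_infinity_general ω hω k Φ G G₂ hG hG₂
end

section
/- Let ω ∈ ℂ with Im ω > 0 and k > 0 real, and set Φ = 3π/2, so that Ĝ(w) = iω·sinh(w − 3πi/2)/(iω·sinh w + k) and h₂(w) = −w + πi − 3πi = −w − 2πi. Then for every w ∈ ℂ with ω²·(sinh w)² + k² ≠ 0, both iω·sinh w + k and iω·sinh(−w − 2πi) + k are nonzero and Ĝ(w) − Ĝ(−w − 2πi) = iω²·sinh(2w)/(ω²·(sinh w)² + k²). (The explicit simplification of Ĝ₂ at Φ = 3π/2.) -/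
open Complex

theorem G2_simplification_at_Phi_three_pi_over_two
    (ω : ℂ) (hω : 0 < ω.im) (k : ℝ) (hk : 0 < k)
    (G : ℂ → ℂ)
    (hG : ∀ w : ℂ, G w = (I * ω * Complex.sinh (w - 3 * Real.pi * I / 2)) /
      (I * ω * Complex.sinh w + k)) :
    ∀ w : ℂ, ω ^ 2 * (Complex.sinh w) ^ 2 + (k : ℂ) ^ 2 ≠ 0 →
      I * ω * Complex.sinh w + k ≠ 0 ∧
      I * ω * Complex.sinh (-w - 2 * Real.pi * I) + k ≠ 0 ∧
      G w - G (-w - 2 * Real.pi * I) =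
        I * ω ^ 2 * Complex.sinh (2 * w) / (ω ^ 2 * (Complex.sinh w) ^ 2 + (k : ℂ) ^ 2) := by
  intro w hden
  -- key sinh identities
  have e2 : Complex.sinh (-w - 2 * Real.pi * I) = -Complex.sinh w := by
    have h : -w - 2 * Real.pi * I = -w + ((-(2*Real.pi):ℝ) : ℂ) * I := by push_cast; ring
    rw [h, Complex.sinh_add, Complex.sinh_mul_I, Complex.cosh_mul_I,
      ← Complex.ofReal_cos, ← Complex.ofReal_sin]
    norm_num [Real.cos_neg, Real.sin_neg, Complex.sinh_neg]
  have e1 : Complex.sinh (w - 3 * Real.pi * I / 2) = I * Complex.cosh w := by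
    have h : w - 3 * Real.pi * I / 2 = w + ((-(3*Real.pi/2):ℝ) : ℂ) * I := by push_cast; ring
    have c : Real.cos (-(3*Real.pi/2)) = 0 := by
      have e : -(3*Real.pi/2) = -(Real.pi + Real.pi/2) := by ring
      rw [e, Real.cos_neg, Real.cos_add]; norm_num
    have s : Real.sin (-(3*Real.pi/2)) = 1 := by
      have e : -(3*Real.pi/2) = -(Real.pi + Real.pi/2) := by ring
      rw [e, Real.sin_neg, Real.sin_add]; norm_num
    rw [h, Complex.sinh_add, Complex.sinh_mul_I, Complex.cosh_mul_I,
      ← Complex.ofReal_cos, ← Complex.ofReal_sin, c, s]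
    push_cast; ring
  have e3 : Complex.sinh (-w - 2 * Real.pi * I - 3 * Real.pi * I / 2) = I * Complex.cosh w := by
    have h : -w - 2 * Real.pi * I - 3 * Real.pi * I / 2 = -w + ((-(7*Real.pi/2):ℝ) : ℂ) * I := by
      push_cast; ring
    have c : Real.cos (-(7*Real.pi/2)) = 0 := by
      have e : -(7*Real.pi/2) = -(Real.pi + Real.pi/2 + 2*Real.pi) := by ring
      rw [e, Real.cos_neg, Real.cos_add, Real.cos_add, Real.cos_two_pi, Real.sin_two_pi]
      norm_num
    have s : Real.sin (-(7*Real.pi/2)) = 1 := by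
      have e : -(7*Real.pi/2) = -(Real.pi + Real.pi/2 + 2*Real.pi) := by ring
      rw [e, Real.sin_neg, Real.sin_add, Real.cos_add, Real.sin_add, Real.cos_two_pi,
        Real.sin_two_pi]
      norm_num
    rw [h, Complex.sinh_add, Complex.sinh_mul_I, Complex.cosh_mul_I,
      ← Complex.ofReal_cos, ← Complex.ofReal_sin, c, s, Complex.cosh_neg]
    push_cast; ring
  -- factorization of the denominator
  have hfac : (I * ω * Complex.sinh w + k) * (-(I * ω * Complex.sinh w) + k)
      = ω ^ 2 * (Complex.sinh w) ^ 2 + (k : ℂ) ^ 2 := by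
    linear_combination (-(ω ^ 2 * (Complex.sinh w) ^ 2)) * Complex.I_sq
  have hA : I * ω * Complex.sinh w + k ≠ 0 := by
    intro h
    exact hden (by rw [← hfac, h, zero_mul])
  have hB' : -(I * ω * Complex.sinh w) + k ≠ 0 := by
    intro h
    exact hden (by rw [← hfac, h, mul_zero])
  have hB : I * ω * Complex.sinh (-w - 2 * Real.pi * I) + k ≠ 0 := by
    rw [e2]; intro h; apply hB'; linear_combination h
  refine ⟨hA, hB, ?_⟩
  rw [hG, hG, e1, e2, e3, Complex.sinh_two_mul]
  have hB2 : I * ω * -Complex.sinh w + (k:ℂ) ≠ 0 := by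
    intro h; apply hB'; linear_combination h
  rw [div_sub_div _ _ hA hB2, div_eq_div_iff (mul_ne_zero hA hB2) hden]
  linear_combination (-2 * I * ω ^ 2 * Complex.cosh w * Complex.sinh w * (k:ℂ) ^ 2) *
    Complex.I_sq
end

section
/- Under the stated assumptions, for every w ∈ ℂ with ω²·(sinh w)² + k² ≠ 0 one has ω²·(sinh(w + 3πi))² + k² ≠ 0 and ω²·(sinh(−w + πi))² + k² ≠ 0, and the function m satisfies the difference equation m(w) − m(w + 3πi) = G₂(w) and the automorphy relation m(−w + πi) = m(w). (m is an h₁-automorphic solution of the shift equation for Φ = 3π/2, where h₁(w) = −w + πi.) -/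
open Complex

theorem m_is_automorphic_solution_of_shift_equation
    (ω : ℂ) (hω : 0 < ω.im) (k : ℝ) (hk : 0 < k)
    (G₂ m : ℂ → ℂ)
    (hG₂ : ∀ w : ℂ, G₂ w = I * ω ^ 2 * Complex.sinh (2 * w) /
      (ω ^ 2 * (Complex.sinh w) ^ 2 + (k : ℂ) ^ 2))
    (hm : ∀ w : ℂ, m w = ((Real.pi + 2 * I * w) / (6 * Real.pi)) * G₂ w) :
    ∀ w : ℂ, ω ^ 2 * (Complex.sinh w) ^ 2 + (k : ℂ) ^ 2 ≠ 0 →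
      ω ^ 2 * (Complex.sinh (w + 3 * Real.pi * I)) ^ 2 + (k : ℂ) ^ 2 ≠ 0 ∧
      ω ^ 2 * (Complex.sinh (-w + Real.pi * I)) ^ 2 + (k : ℂ) ^ 2 ≠ 0 ∧
      m w - m (w + 3 * Real.pi * I) = G₂ w ∧
      m (-w + Real.pi * I) = m w := by
  intro w hw
  have hsp : Complex.sinh (↑Real.pi * I) = 0 := by
    rw [Complex.sinh_mul_I, ← Complex.ofReal_sin, Real.sin_pi, Complex.ofReal_zero, zero_mul]
  have hcp : Complex.cosh (↑Real.pi * I) = -1 := by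
    rw [Complex.cosh_mul_I, ← Complex.ofReal_cos, Real.cos_pi]; norm_num
  have h3s : Complex.sinh (3 * ↑Real.pi * I) = 0 := by
    rw [show (3 * (Real.pi : ℂ) * I) = ((3 * Real.pi : ℝ) : ℂ) * I by push_cast; ring,
      Complex.sinh_mul_I, ← Complex.ofReal_sin,
      show (3 * Real.pi) = Real.pi + 2 * Real.pi by ring, Real.sin_add_two_pi, Real.sin_pi,
      Complex.ofReal_zero, zero_mul]
  have h3c : Complex.cosh (3 * ↑Real.pi * I) = -1 := by
    rw [show (3 * (Real.pi : ℂ) * I) = ((3 * Real.pi : ℝ) : ℂ) * I by push_cast; ring,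
      Complex.cosh_mul_I, ← Complex.ofReal_cos,
      show (3 * Real.pi) = Real.pi + 2 * Real.pi by ring, Real.cos_add_two_pi, Real.cos_pi]
    norm_num
  have h6s : Complex.sinh (6 * ↑Real.pi * I) = 0 := by
    rw [show (6 * (Real.pi : ℂ) * I) = ((6 * Real.pi : ℝ) : ℂ) * I by push_cast; ring,
      Complex.sinh_mul_I, ← Complex.ofReal_sin,
      show (6 * Real.pi) = ((6 : ℤ) : ℝ) * Real.pi by norm_num, Real.sin_int_mul_pi,
      Complex.ofReal_zero, zero_mul]
  have h6c : Complex.cosh (6 * ↑Real.pi * I) = 1 := by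
    rw [show (6 * (Real.pi : ℂ) * I) = ((6 * Real.pi : ℝ) : ℂ) * I by push_cast; ring,
      Complex.cosh_mul_I, ← Complex.ofReal_cos,
      show (6 * Real.pi) = (3 : ℤ) * (2 * Real.pi) by push_cast; ring, Real.cos_int_mul_two_pi,
      Complex.ofReal_one]
  have h2s : Complex.sinh (2 * ↑Real.pi * I) = 0 := by
    rw [show (2 * (Real.pi : ℂ) * I) = ((2 * Real.pi : ℝ) : ℂ) * I by push_cast; ring,
      Complex.sinh_mul_I, ← Complex.ofReal_sin, Real.sin_two_pi, Complex.ofReal_zero, zero_mul]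
  have h2c : Complex.cosh (2 * ↑Real.pi * I) = 1 := by
    rw [show (2 * (Real.pi : ℂ) * I) = ((2 * Real.pi : ℝ) : ℂ) * I by push_cast; ring,
      Complex.cosh_mul_I, ← Complex.ofReal_cos, Real.cos_two_pi, Complex.ofReal_one]
  have h1 : Complex.sinh (w + 3 * ↑Real.pi * I) = -Complex.sinh w := by
    rw [Complex.sinh_add, h3s, h3c]; ring
  have h2 : Complex.sinh (-w + ↑Real.pi * I) = Complex.sinh w := by
    rw [Complex.sinh_add, hsp, hcp, Complex.sinh_neg]; ring
  have h3 : Complex.sinh (2 * (w + 3 * ↑Real.pi * I)) = Complex.sinh (2 * w) := by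
    rw [show (2 * (w + 3 * (Real.pi : ℂ) * I)) = 2 * w + 6 * ↑Real.pi * I by ring,
      Complex.sinh_add, h6s, h6c]; ring
  have h4 : Complex.sinh (2 * (-w + ↑Real.pi * I)) = -Complex.sinh (2 * w) := by
    rw [show (2 * (-w + (Real.pi : ℂ) * I)) = -(2 * w) + 2 * ↑Real.pi * I by ring,
      Complex.sinh_add, h2s, h2c, Complex.sinh_neg]; ring
  have hd1 : ω ^ 2 * (Complex.sinh (w + 3 * Real.pi * I)) ^ 2 + (k : ℂ) ^ 2 =
      ω ^ 2 * (Complex.sinh w) ^ 2 + (k : ℂ) ^ 2 := by rw [h1]; ring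
  have hd2 : ω ^ 2 * (Complex.sinh (-w + Real.pi * I)) ^ 2 + (k : ℂ) ^ 2 =
      ω ^ 2 * (Complex.sinh w) ^ 2 + (k : ℂ) ^ 2 := by rw [h2]
  refine ⟨hd1 ▸ hw, hd2 ▸ hw, ?_, ?_⟩
  · rw [hm, hm, hG₂, hG₂, h3, hd1,
      show ((Real.pi : ℂ) + 2 * I * (w + 3 * ↑Real.pi * I)) = 2 * I * w - 5 * Real.pi by
        linear_combination 6 * (Real.pi : ℂ) * Complex.I_sq]
    have hπ : (Real.pi : ℂ) ≠ 0 := by exact_mod_cast Real.pi_ne_zero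
    field_simp
    ring
  · rw [hm, hm, hG₂, hG₂, h4, hd2,
      show ((Real.pi : ℂ) + 2 * I * (-w + ↑Real.pi * I)) = -((Real.pi : ℂ) + 2 * I * w) by
        linear_combination 2 * (Real.pi : ℂ) * Complex.I_sq]
    ring
end

section
/- Under the stated assumptions, the function Q has simple poles with the following residues: at p₁ the residue is i − m₁; at p₁ + πi and at p₁ − 2πi the residue is −m₂; at p₁ − πi and at p₁ + 2πi the residue is −m₃; at −p₁ + πi and at −p₁ − 2πi the residue is −(i − m₁); at −p₁ the residue is m₂; and at −p₁ − πi and at −p₁ + 2πi the residue is m₃. (Each residue is understood as the limit of (w − a)·Q(w) as w → a, w ≠ a.) -/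
open Complex Filter Topology

/-- The complex hyperbolic cotangent. -/
noncomputable def Complex.coth (z : ℂ) : ℂ := Complex.cosh z / Complex.sinh z

/-!
Each term `c / 3 * coth ((w - a) / 3)` of `Q` has simple poles exactly on `a + 3πiℤ`, with residue
`c` at each of them, because `coth` is `πi`-periodic and `z * coth z → 1` as `z → 0`. The six centres
of `Q` are `±p₁ + tπi` with `t ∈ {-1, 0, 1}`. As `Re p₁ ≠ 0`, a point `±p₁ + sπi` lies on the pole
lattice of exactly one term, the one with the same sign and `t ≡ s [ZMOD 3]`; every other term is
continuous there.
-/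

open scoped Real

namespace Complex

theorem sinh_eq_zero_iff {z : ℂ} : sinh z = 0 ↔ ∃ k : ℤ, z = k * π * I := by
  have hz : z = -(z * I) * I := by rw [neg_mul, mul_assoc, I_mul_I, mul_neg_one, neg_neg]
  rw [hz, sinh_mul_I, mul_eq_zero, or_iff_left I_ne_zero, sin_eq_zero_iff, ← hz]
  refine exists_congr fun k => ⟨fun h => ?_, fun h => ?_⟩
  · rw [hz, h]
  · linear_combination -I * h - (k * π : ℂ) * I_mul_I

theorem coth_periodic : Function.Periodic coth (π * I) := fun z => by
  simp only [coth, cosh_add_pi_mul_I, sinh_add_pi_mul_I, neg_div_neg_eq]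

theorem continuousAt_coth {z : ℂ} (hz : sinh z ≠ 0) : ContinuousAt coth z :=
  continuous_cosh.continuousAt.div continuous_sinh.continuousAt hz

theorem tendsto_mul_coth_nhdsNE_zero : Tendsto (fun z => z * coth z) (𝓝[≠] 0) (𝓝 1) := by
  have hslope : Tendsto (fun z => z⁻¹ * sinh z) (𝓝[≠] 0) (𝓝 1) := by
    simpa [hasDerivAt_iff_tendsto_slope_zero] using hasDerivAt_sinh 0
  have hcosh : Tendsto cosh (𝓝[≠] 0) (𝓝 1) := by
    simpa using continuous_cosh.continuousAt.tendsto.mono_left (nhdsWithin_le_nhds (a := (0 : ℂ)))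
  simpa [coth, div_eq_mul_inv, mul_comm, mul_left_comm] using hcosh.mul (hslope.inv₀ one_ne_zero)

theorem sinh_int_mul_add_int_mul_pi_I_div_three_ne_zero {p : ℂ} (hp : p.re ≠ 0) {m n : ℤ}
    (h : m ≠ 0 ∨ ¬ 3 ∣ n) : sinh ((m * p + n * π * I) / 3) ≠ 0 := by
  rw [Ne, sinh_eq_zero_iff]
  rintro ⟨k, hk⟩
  have hre := congrArg re hk
  have him := congrArg im hk
  simp only [div_ofNat_re, div_ofNat_im, add_re, add_im, mul_re, mul_im, intCast_re, intCast_im,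
    ofReal_re, ofReal_im, I_re, I_im] at hre him
  obtain rfl : m = 0 := by simpa [hp] using hre
  refine h.resolve_left (not_not.2 rfl) ⟨k, ?_⟩
  have hn : (n : ℝ) * π = (3 * k : ℤ) * π := by push_cast; linear_combination 3 * him
  exact_mod_cast mul_right_cancel₀ Real.pi_ne_zero hn

end Complex

theorem tendsto_sub_mul_of_continuousAt {R : Type*} [Ring R] [TopologicalSpace R]
    [IsTopologicalRing R] {f : R → R} {b : R} (hf : ContinuousAt f b) :
    Tendsto (fun w => (w - b) * f w) (𝓝[≠] b) (𝓝 0) := by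
  have h : ContinuousAt (fun w => (w - b) * f w) b := (continuousAt_id.sub continuousAt_const).mul hf
  simpa using h.tendsto.mono_left nhdsWithin_le_nhds

theorem tendsto_sub_mul_coth_div {r a b : ℂ} (hr : r ≠ 0) {n : ℤ} (hb : b = a + r * n * π * I) :
    Tendsto (fun w => (w - b) * coth ((w - a) / r)) (𝓝[≠] b) (𝓝 r) := by
  have hshift (w : ℂ) : coth ((w - a) / r) = coth ((w - b) / r) := by
    rw [hb, ← coth_periodic.int_mul n ((w - (a + r * n * π * I)) / r)]
    congr 1; field_simp; ring
  have hmap : Tendsto (fun w => (w - b) / r) (𝓝[≠] b) (𝓝[≠] 0) := by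
    refine tendsto_nhdsWithin_of_tendsto_nhds_of_eventually_within _ ?_ ?_
    · have h : ContinuousAt (fun w => (w - b) / r) b := (continuous_sub_right b).div_const r |>.continuousAt
      simpa using h.tendsto.mono_left nhdsWithin_le_nhds
    · filter_upwards [self_mem_nhdsWithin] with w hw
      simpa [sub_eq_zero, hr] using hw
  have := (tendsto_mul_coth_nhdsNE_zero.comp hmap).const_mul r
  simp only [mul_one] at this
  refine this.congr fun w => ?_
  simp only [Function.comp_apply, hshift]
  field_simp

theorem tendsto_sub_mul_sum_coth_div {ι : Type*} [Fintype ι] {r : ℂ} (hr : r ≠ 0) (c a : ι → ℂ)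
    {b : ℂ} {j : ι} {n : ℤ} (hb : b = a j + r * n * π * I)
    (hreg : ∀ i ≠ j, sinh ((b - a i) / r) ≠ 0) :
    Tendsto (fun w => (w - b) * ∑ i, c i / r * coth ((w - a i) / r)) (𝓝[≠] b) (𝓝 (c j)) := by
  classical
  have hpole : Tendsto (fun w => (w - b) * (c j / r * coth ((w - a j) / r))) (𝓝[≠] b) (𝓝 (c j)) := by
    have := (tendsto_sub_mul_coth_div hr hb).const_mul (c j / r)
    rw [div_mul_cancel₀ _ hr] at this
    exact this.congr fun w => by ring
  have hrest : ContinuousAt (fun w => ∑ i ∈ Finset.univ.erase j, c i / r * coth ((w - a i) / r)) b :=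
    tendsto_finsetSum _ fun i hi => continuousAt_const.mul <|
      (continuousAt_coth (hreg i (Finset.ne_of_mem_erase hi))).comp (x := b)
        (f := fun w => (w - a i) / r) ((continuous_sub_right (a i)).div_const r).continuousAt
  have := hpole.add (tendsto_sub_mul_of_continuousAt hrest)
  rw [add_zero] at this
  refine this.congr fun w => ?_
  rw [← Finset.add_sum_erase _ _ (Finset.mem_univ j), mul_add]

theorem tendsto_sub_mul_sum_coth_div_three {ι : Type*} [Fintype ι] {p : ℂ} (hp : p.re ≠ 0)
    (c : ι → ℂ) (σ t : ι → ℤ) {b : ℂ} {j : ι} {s : ℤ} (hb : b = σ j * p + s * π * I)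
    (hj : 3 ∣ s - t j) (hreg : ∀ i ≠ j, σ i ≠ σ j ∨ ¬ 3 ∣ s - t i) :
    Tendsto (fun w => (w - b) * ∑ i, c i / 3 * coth ((w - (σ i * p + t i * π * I)) / 3))
      (𝓝[≠] b) (𝓝 (c j)) := by
  obtain ⟨n, hn⟩ := hj
  refine tendsto_sub_mul_sum_coth_div three_ne_zero c _ (n := n) ?_ fun i hi => ?_
  · rw [hb, show (s : ℂ) = t j + 3 * n by exact_mod_cast (sub_eq_iff_eq_add'.1 hn)]
    ring
  · convert sinh_int_mul_add_int_mul_pi_I_div_three_ne_zero hp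
      ((hreg i hi).imp (sub_ne_zero.2 ∘ Ne.symm) id) using 3
    rw [hb]; push_cast; ring

theorem residues_of_Q_general
    (p₁ : ℂ)
    (hre : p₁.re ≠ 0)
    (m₁ m₂ m₃ : ℂ)
    (Q : ℂ → ℂ)
    (hQ : ∀ w : ℂ, Q w =
      ((I - m₁) / 3) * Complex.coth ((w - p₁) / 3)
      - (m₂ / 3) * Complex.coth ((w - p₁ - Real.pi * I) / 3)
      - (m₃ / 3) * Complex.coth ((w - p₁ + Real.pi * I) / 3)
      - ((I - m₁) / 3) * Complex.coth ((w + p₁ - Real.pi * I) / 3)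
      + (m₂ / 3) * Complex.coth ((w + p₁) / 3)
      + (m₃ / 3) * Complex.coth ((w + p₁ + Real.pi * I) / 3)) :
    Tendsto (fun w => (w - p₁) * Q w) (𝓝[≠] p₁) (𝓝 (I - m₁)) ∧
    Tendsto (fun w => (w - (p₁ + Real.pi * I)) * Q w) (𝓝[≠] (p₁ + Real.pi * I)) (𝓝 (-m₂)) ∧
    Tendsto (fun w => (w - (p₁ - 2 * Real.pi * I)) * Q w) (𝓝[≠] (p₁ - 2 * Real.pi * I)) (𝓝 (-m₂)) ∧
    Tendsto (fun w => (w - (p₁ - Real.pi * I)) * Q w) (𝓝[≠] (p₁ - Real.pi * I)) (𝓝 (-m₃)) ∧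
    Tendsto (fun w => (w - (p₁ + 2 * Real.pi * I)) * Q w) (𝓝[≠] (p₁ + 2 * Real.pi * I)) (𝓝 (-m₃)) ∧
    Tendsto (fun w => (w - (-p₁ + Real.pi * I)) * Q w) (𝓝[≠] (-p₁ + Real.pi * I)) (𝓝 (-(I - m₁))) ∧
    Tendsto (fun w => (w - (-p₁ - 2 * Real.pi * I)) * Q w) (𝓝[≠] (-p₁ - 2 * Real.pi * I)) (𝓝 (-(I - m₁))) ∧
    Tendsto (fun w => (w - (-p₁)) * Q w) (𝓝[≠] (-p₁)) (𝓝 m₂) ∧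
    Tendsto (fun w => (w - (-p₁ - Real.pi * I)) * Q w) (𝓝[≠] (-p₁ - Real.pi * I)) (𝓝 m₃) ∧
    Tendsto (fun w => (w - (-p₁ + 2 * Real.pi * I)) * Q w) (𝓝[≠] (-p₁ + 2 * Real.pi * I)) (𝓝 m₃) := by
  let σ : Fin 6 → ℤ := ![1, 1, 1, -1, -1, -1]
  let t : Fin 6 → ℤ := ![0, 1, -1, 1, 0, -1]
  let c : Fin 6 → ℂ := ![I - m₁, -m₂, -m₃, -(I - m₁), m₂, m₃]
  have hQ_sum : Q = fun w => ∑ i, c i / 3 * coth ((w - (σ i * p₁ + t i * π * I)) / 3) := by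
    funext w
    simp only [hQ, Fin.sum_univ_six, c, σ, t, Matrix.cons_val]
    push_cast
    ring_nf
  subst hQ_sum
  have residue (j : Fin 6) (s : ℤ) {b : ℂ} (hb : b = σ j * p₁ + s * π * I)
      (hj : 3 ∣ s - t j) (hreg : ∀ i ≠ j, σ i ≠ σ j ∨ ¬ 3 ∣ s - t i) :=
    tendsto_sub_mul_sum_coth_div_three hre c σ t hb hj hreg
  refine ⟨residue 0 0 ?_ ?_ ?_, residue 1 1 ?_ ?_ ?_, residue 1 (-2) ?_ ?_ ?_,
    residue 2 (-1) ?_ ?_ ?_, residue 2 2 ?_ ?_ ?_, residue 3 1 ?_ ?_ ?_, residue 3 (-2) ?_ ?_ ?_,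
    residue 4 0 ?_ ?_ ?_, residue 5 (-1) ?_ ?_ ?_, residue 5 2 ?_ ?_ ?_⟩
  all_goals first | decide | (simp [σ] <;> ring)

theorem residues_of_Q
    (ω : ℂ) (hω : 0 < ω.im) (k : ℝ) (hk : 0 < k)
    (p₁ : ℂ) (hp : Complex.sinh p₁ = I * k / ω) (hc : Complex.cosh p₁ ≠ 0)
    (hre : p₁.re ≠ 0)
    (m₁ m₂ m₃ : ℂ)
    (hm₁ : m₁ = -p₁ / (3 * Real.pi) + I / 6)
    (hm₂ : m₂ = -p₁ / (3 * Real.pi) - I / 6)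
    (hm₃ : m₃ = -p₁ / (3 * Real.pi) + I / 2)
    (Q : ℂ → ℂ)
    (hQ : ∀ w : ℂ, Q w =
      ((I - m₁) / 3) * Complex.coth ((w - p₁) / 3)
      - (m₂ / 3) * Complex.coth ((w - p₁ - Real.pi * I) / 3)
      - (m₃ / 3) * Complex.coth ((w - p₁ + Real.pi * I) / 3)
      - ((I - m₁) / 3) * Complex.coth ((w + p₁ - Real.pi * I) / 3)
      + (m₂ / 3) * Complex.coth ((w + p₁) / 3)
      + (m₃ / 3) * Complex.coth ((w + p₁ + Real.pi * I) / 3)) :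
    Tendsto (fun w => (w - p₁) * Q w) (𝓝[≠] p₁) (𝓝 (I - m₁)) ∧
    Tendsto (fun w => (w - (p₁ + Real.pi * I)) * Q w) (𝓝[≠] (p₁ + Real.pi * I)) (𝓝 (-m₂)) ∧
    Tendsto (fun w => (w - (p₁ - 2 * Real.pi * I)) * Q w) (𝓝[≠] (p₁ - 2 * Real.pi * I)) (𝓝 (-m₂)) ∧
    Tendsto (fun w => (w - (p₁ - Real.pi * I)) * Q w) (𝓝[≠] (p₁ - Real.pi * I)) (𝓝 (-m₃)) ∧
    Tendsto (fun w => (w - (p₁ + 2 * Real.pi * I)) * Q w) (𝓝[≠] (p₁ + 2 * Real.pi * I)) (𝓝 (-m₃)) ∧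
    Tendsto (fun w => (w - (-p₁ + Real.pi * I)) * Q w) (𝓝[≠] (-p₁ + Real.pi * I)) (𝓝 (-(I - m₁))) ∧
    Tendsto (fun w => (w - (-p₁ - 2 * Real.pi * I)) * Q w) (𝓝[≠] (-p₁ - 2 * Real.pi * I)) (𝓝 (-(I - m₁))) ∧
    Tendsto (fun w => (w - (-p₁)) * Q w) (𝓝[≠] (-p₁)) (𝓝 m₂) ∧
    Tendsto (fun w => (w - (-p₁ - Real.pi * I)) * Q w) (𝓝[≠] (-p₁ - Real.pi * I)) (𝓝 m₃) ∧
    Tendsto (fun w => (w - (-p₁ + 2 * Real.pi * I)) * Q w) (𝓝[≠] (-p₁ + 2 * Real.pi * I)) (𝓝 m₃) :=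
  residues_of_Q_general p₁ hre m₁ m₂ m₃ Q hQ
end

section
/- Let ω = ω₁ + iω₂ ∈ ℂ with ω₂ > 0 and let τ₀ ∈ (0, π/2]. Then there exists a constant C > 0 (depending only on ω and τ₀) such that for every ρ > 0, every τ ∈ [τ₀, π − τ₀], and every w₁ ∈ ℝ, setting w = w₁ + i·arctan((ω₁/ω₂)·tanh w₁), one has |exp(−ω·ρ·sinh(w − iτ))| ≤ exp(−C·ρ·cosh w₁). (The superexponential decay estimate for the Sommerfeld exponential along the contour Γ₀.) -/
/-!
On `Γ₀` the angle `θ = arctan ((ω₁/ω₂) tanh w₁)` satisfies `K sin θ = S cos θ` with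
`S = ω₁ sinh w₁` and `K = ω₂ cosh w₁`. The exponent has real part `-ρ (S cos (θ - τ) - K sin (θ - τ))`,
and this relation cancels the `cos τ` terms: `S cos (θ - τ) - K sin (θ - τ) = sin τ (S sin θ + K cos θ)`,
where `S sin θ ≥ 0`. So the real part is at most `-ρ K cos θ sin τ`, and the bounds
`cos θ ≥ (1 + (ω₁/ω₂)²)^(-1/2)` and `sin τ ≥ sin τ₀` give `C = ω₂ sin τ₀ / √(1 + (ω₁/ω₂)²)`.
-/

open Complex

theorem Complex.sinh_ofReal_add_ofReal_mul_I (x y : ℝ) :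
    sinh (x + y * I) = (Real.sinh x * Real.cos y : ℝ) + (Real.cosh x * Real.sin y : ℝ) * I := by
  rw [sinh_add, sinh_mul_I, cosh_mul_I]
  push_cast
  ring

theorem re_neg_mul_sinh_ofReal_add_ofReal_mul_I (ω₁ ω₂ ρ x y : ℝ) :
    (-((ω₁ : ℂ) + ω₂ * I) * ρ * sinh (x + y * I)).re
      = -ρ * (ω₁ * Real.sinh x * Real.cos y - ω₂ * Real.cosh x * Real.sin y) := by
  rw [sinh_ofReal_add_ofReal_mul_I]
  simp only [mul_re, mul_im, neg_re, neg_im, add_re, add_im, I_re, I_im, ofReal_re, ofReal_im]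
  ring

namespace Real

theorem sin_le_sin_of_le_of_le_pi_sub {τ₀ τ : ℝ} (hτ₀ : -(π / 2) ≤ τ₀) (h₁ : τ₀ ≤ τ)
    (h₂ : τ ≤ π - τ₀) : sin τ₀ ≤ sin τ := by
  rcases le_total τ (π / 2) with h | h
  · exact sin_le_sin_of_le_of_le_pi_div_two hτ₀ h h₁
  · rw [← sin_pi_sub τ]
    exact sin_le_sin_of_le_of_le_pi_div_two hτ₀ (by linarith) (by linarith)

theorem inv_sqrt_one_add_sq_le_cos_arctan_mul_tanh (a x : ℝ) :
    1 / √(1 + a ^ 2) ≤ cos (arctan (a * tanh x)) := by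
  have htanh : (a * tanh x) ^ 2 ≤ a ^ 2 := by
    rw [mul_pow]
    exact mul_le_of_le_one_right (sq_nonneg a) (tanh_sq_lt_one x).le
  rw [cos_arctan]
  gcongr

theorem sin_arctan_eq_mul_cos (y : ℝ) : sin (arctan y) = y * cos (arctan y) := by
  rw [sin_arctan, cos_arctan, mul_one_div]

theorem mul_cosh_mul_sin_arctan {ω₂ : ℝ} (ω₁ : ℝ) (hω₂ : ω₂ ≠ 0) (x : ℝ) :
    ω₂ * cosh x * sin (arctan (ω₁ / ω₂ * tanh x))
      = ω₁ * sinh x * cos (arctan (ω₁ / ω₂ * tanh x)) := by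
  rw [sin_arctan_eq_mul_cos, tanh_eq_sinh_div_cosh]
  field_simp

theorem mul_cos_sub_sub_mul_sin_sub {S K θ : ℝ} (h : K * sin θ = S * cos θ) (τ : ℝ) :
    S * cos (θ - τ) - K * sin (θ - τ) = sin τ * (S * sin θ + K * cos θ) := by
  rw [cos_sub, sin_sub]
  linear_combination (-cos τ) * h

theorem mul_cos_mul_sin_le_mul_cos_sub_sub_mul_sin_sub {S K θ τ : ℝ} (hK : 0 < K)
    (hθ : 0 ≤ cos θ) (hτ : 0 ≤ sin τ) (h : K * sin θ = S * cos θ) :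
    K * cos θ * sin τ ≤ S * cos (θ - τ) - K * sin (θ - τ) := by
  have hS : 0 ≤ S * sin θ := by
    refine nonneg_of_mul_nonneg_right ?_ hK
    calc (0 : ℝ) ≤ S ^ 2 * cos θ := by positivity
      _ = K * (S * sin θ) := by linear_combination (-S) * h
  rw [mul_cos_sub_sub_mul_sin_sub h]
  nlinarith [mul_nonneg hτ hS]

end Real

theorem sommerfeld_exponential_decay_estimate
    (ω₁ ω₂ : ℝ) (hω₂ : 0 < ω₂) (τ₀ : ℝ) (hτ₀ : 0 < τ₀) (hτ₀' : τ₀ ≤ Real.pi / 2) :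
    ∃ C > (0 : ℝ), ∀ ρ : ℝ, 0 < ρ → ∀ τ : ℝ, τ₀ ≤ τ → τ ≤ Real.pi - τ₀ → ∀ w₁ : ℝ,
      ‖(Complex.exp (-((ω₁ : ℂ) + (ω₂ : ℂ) * I) * (ρ : ℂ) *
        Complex.sinh ((w₁ : ℂ) + (Real.arctan ((ω₁ / ω₂) * Real.tanh w₁) : ℂ) * I - I * (τ : ℂ))))‖
      ≤ Real.exp (-C * ρ * Real.cosh w₁) := by
  have hsinτ₀ : 0 < Real.sin τ₀ := Real.sin_pos_of_pos_of_lt_pi hτ₀ (by linarith [Real.pi_pos])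
  refine ⟨ω₂ * Real.sin τ₀ / √(1 + (ω₁ / ω₂) ^ 2), by positivity, fun ρ hρ τ hτ₁ hτ₂ w₁ => ?_⟩
  set θ := Real.arctan (ω₁ / ω₂ * Real.tanh w₁)
  have hsinτ : Real.sin τ₀ ≤ Real.sin τ :=
    Real.sin_le_sin_of_le_of_le_pi_sub (by linarith [Real.pi_pos]) hτ₁ hτ₂
  have hdecay : ω₂ * Real.cosh w₁ * Real.cos θ * Real.sin τ
      ≤ ω₁ * Real.sinh w₁ * Real.cos (θ - τ) - ω₂ * Real.cosh w₁ * Real.sin (θ - τ) :=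
    Real.mul_cos_mul_sin_le_mul_cos_sub_sub_mul_sin_sub (by positivity) (Real.cos_arctan_pos _).le
      (hsinτ₀.trans_le hsinτ).le (Real.mul_cosh_mul_sin_arctan ω₁ hω₂.ne' w₁)
  have hC : ω₂ * Real.sin τ₀ / √(1 + (ω₁ / ω₂) ^ 2) * Real.cosh w₁
      ≤ ω₂ * Real.cosh w₁ * Real.cos θ * Real.sin τ :=
    calc ω₂ * Real.sin τ₀ / √(1 + (ω₁ / ω₂) ^ 2) * Real.cosh w₁
        = ω₂ * Real.cosh w₁ * (1 / √(1 + (ω₁ / ω₂) ^ 2)) * Real.sin τ₀ := by ring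
      _ ≤ ω₂ * Real.cosh w₁ * Real.cos θ * Real.sin τ := by
        gcongr
        exact Real.inv_sqrt_one_add_sq_le_cos_arctan_mul_tanh _ _
  have harg : (w₁ : ℂ) + θ * I - I * τ = w₁ + ((θ - τ : ℝ) : ℂ) * I := by push_cast; ring
  rw [norm_exp, harg, re_neg_mul_sinh_ofReal_add_ofReal_mul_I, Real.exp_le_exp]
  linarith [mul_le_mul_of_nonneg_left (hC.trans hdecay) hρ.le]
end

section
/- Let ω ∈ ℂ with Im ω > 0, let μ ∈ (0, 1), M ≥ 0, and let φ : [0, ∞) → ℂ be a measurable function with |φ(w)| ≤ M·e^{−μw} for all w ≥ 0. Then there exists a constant C > 0 such that for all ρ ∈ (0, 1], the integral ∫₀^∞ e^{iωρ·cosh w}·cosh w·φ(w) dw converges absolutely and |∫₀^∞ e^{iωρ·cosh w}·cosh w·φ(w) dw| ≤ C·ρ^{μ − 1}. (This is the estimate of Lemma 9.2 with μ = π/(2Φ), governing the behavior at the origin of the gradient of the Sommerfeld integral.) -/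
open Complex MeasureTheory Set

/-!
For real `ρ`, `w` we have `|exp (i ω ρ cosh w)| = exp (-(Im ω) ρ cosh w)`, and on `w ≥ 0` the bounds
`eʷ/2 ≤ cosh w ≤ eʷ` dominate the integrand by `M e^{(1-μ)w} exp (-c eʷ)` with `c = (Im ω) ρ / 2`.
The substitution `t = eʷ` turns the integral of this majorant into a truncated Gamma integral
`∫₁^∞ t^{-μ} e^{-ct} dt ≤ Γ(1-μ) c^{μ-1}`, which is the power `ρ^{μ-1}` up to a constant.
-/

namespace Real

lemma exp_smul_rpow_mul_exp_neg_mul (s c w : ℝ) :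
    exp w • (exp w ^ (s - 1) * exp (-(c * exp w))) = exp (s * w) * exp (-(c * exp w)) := by
  rw [smul_eq_mul, ← exp_mul, ← mul_assoc, ← exp_add]
  ring_nf

lemma integrableOn_rpow_sub_one_mul_exp_neg_mul {s c : ℝ} (hs : 0 < s) (hc : 0 < c) :
    IntegrableOn (fun t : ℝ => t ^ (s - 1) * exp (-(c * t))) (Ioi 0) := by
  simpa using integrableOn_rpow_mul_exp_neg_mul_rpow (p := 1) (by linarith) one_pos hc

lemma integrableOn_exp_mul_mul_exp_neg_mul_exp {s c : ℝ} (hs : 0 < s) (hc : 0 < c) :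
    IntegrableOn (fun w => exp (s * w) * exp (-(c * exp w))) (Ioi 0) := by
  simpa only [exp_smul_rpow_mul_exp_neg_mul] using
    (integrableOn_comp_exp_Ioi (fun t => t ^ (s - 1) * exp (-(c * t))) 0).mpr
      ((integrableOn_rpow_sub_one_mul_exp_neg_mul hs hc).mono_set (Ioi_subset_Ioi (exp_pos 0).le))

lemma integral_exp_mul_mul_exp_neg_mul_exp_le {s c : ℝ} (hs : 0 < s) (hc : 0 < c) :
    ∫ w in Ioi 0, exp (s * w) * exp (-(c * exp w)) ≤ (1 / c) ^ s * Gamma s := by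
  have hgamma := integrableOn_rpow_sub_one_mul_exp_neg_mul hs hc
  calc ∫ w in Ioi 0, exp (s * w) * exp (-(c * exp w))
      = ∫ t in Ioi 1, t ^ (s - 1) * exp (-(c * t)) := by
        simpa only [exp_smul_rpow_mul_exp_neg_mul, exp_zero] using
          integral_comp_exp_Ioi (fun t => t ^ (s - 1) * exp (-(c * t))) 0
    _ ≤ ∫ t in Ioi 0, t ^ (s - 1) * exp (-(c * t)) := by
        refine setIntegral_mono_set hgamma ?_ (Ioi_subset_Ioi zero_le_one).eventuallyLE
        filter_upwards [ae_restrict_mem measurableSet_Ioi] with t ht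
        exact mul_nonneg (rpow_nonneg (le_of_lt ht) _) (exp_pos _).le
    _ = (1 / c) ^ s * Gamma s := integral_rpow_mul_exp_neg_mul_Ioi hs hc

end Real

lemma norm_cexp_I_mul_mul_ofReal (ω : ℂ) (x : ℝ) :
    ‖cexp (I * ω * x)‖ = Real.exp (-(ω.im * x)) := by
  simp [Complex.norm_exp, mul_re, mul_im]

lemma norm_cexp_I_mul_mul_cosh_mul_cosh_le {ω : ℂ} (hω : 0 ≤ ω.im) {ρ w : ℝ} (hρ : 0 ≤ ρ)
    (hw : 0 ≤ w) :
    ‖cexp (I * ω * ρ * cosh w) * cosh w‖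
      ≤ Real.exp (-(ω.im * ρ / 2 * Real.exp w)) * Real.exp w := by
  have hcosh_le : Real.cosh w ≤ Real.exp w := by
    rw [Real.cosh_eq]
    linarith [Real.exp_le_exp.mpr (neg_le_self hw)]
  have hcosh_ge : Real.exp w / 2 ≤ Real.cosh w := by
    rw [Real.cosh_eq]
    linarith [Real.exp_pos (-w)]
  rw [norm_mul, ← ofReal_cosh, mul_assoc, ← ofReal_mul, norm_cexp_I_mul_mul_ofReal, norm_real,
    Real.norm_of_nonneg (Real.cosh_pos w).le]
  refine mul_le_mul (Real.exp_le_exp.mpr ?_) hcosh_le (Real.cosh_pos w).le (Real.exp_pos _).le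
  nlinarith [mul_nonneg hω hρ]

lemma norm_cexp_I_mul_mul_cosh_mul_cosh_mul_le {ω : ℂ} (hω : 0 ≤ ω.im) {ρ w μ M : ℝ}
    (hρ : 0 ≤ ρ) (hw : 0 ≤ w) {z : ℂ} (hz : ‖z‖ ≤ M * Real.exp (-μ * w)) :
    ‖cexp (I * ω * ρ * cosh w) * cosh w * z‖
      ≤ M * (Real.exp ((1 - μ) * w) * Real.exp (-(ω.im * ρ / 2 * Real.exp w))) := by
  calc ‖cexp (I * ω * ρ * cosh w) * cosh w * z‖
      ≤ Real.exp (-(ω.im * ρ / 2 * Real.exp w)) * Real.exp w * (M * Real.exp (-μ * w)) := by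
        rw [norm_mul]
        exact mul_le_mul (norm_cexp_I_mul_mul_cosh_mul_cosh_le hω hρ hw) hz (norm_nonneg z)
          (by positivity)
    _ = M * (Real.exp ((1 - μ) * w) * Real.exp (-(ω.im * ρ / 2 * Real.exp w))) := by
        rw [sub_mul, one_mul, sub_eq_add_neg, ← neg_mul, Real.exp_add]
        ring

theorem sommerfeld_integral_origin_estimate_general
    (ω : ℂ) (hω : 0 < ω.im) (μ : ℝ) (hμ1 : μ < 1)
    (M : ℝ) (hM : 0 ≤ M) (φ : ℝ → ℂ) (hmeas : Measurable φ)
    (hφ : ∀ w : ℝ, 0 ≤ w → ‖φ w‖ ≤ M * Real.exp (-μ * w)) :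
    ∃ C > (0 : ℝ), ∀ ρ : ℝ, 0 < ρ → ρ ≤ 1 →
      IntegrableOn (fun w : ℝ =>
        Complex.exp (I * ω * (ρ : ℂ) * Complex.cosh (w : ℂ)) * Complex.cosh (w : ℂ) * φ w)
        (Set.Ici 0) ∧
      ‖∫ w in Set.Ici (0 : ℝ),
        Complex.exp (I * ω * (ρ : ℂ) * Complex.cosh (w : ℂ)) * Complex.cosh (w : ℂ) * φ w‖
      ≤ C * ρ ^ (μ - 1) := by
  have hμ : 0 < 1 - μ := by linarith
  set K := (2 / ω.im) ^ (1 - μ) * Real.Gamma (1 - μ)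
  refine ⟨(M + 1) * K, by positivity, fun ρ hρ _ => ?_⟩
  set c := ω.im * ρ / 2
  have hc : 0 < c := by positivity
  have hbound : ∀ᵐ (w : ℝ) ∂volume.restrict (Ici (0 : ℝ)),
      ‖cexp (I * ω * ρ * cosh w) * cosh w * φ w‖
        ≤ M * (Real.exp ((1 - μ) * w) * Real.exp (-(c * Real.exp w))) := by
    filter_upwards [ae_restrict_mem measurableSet_Ici] with w (hw : 0 ≤ w)
    exact norm_cexp_I_mul_mul_cosh_mul_cosh_mul_le hω.le hρ.le hw (hφ w hw)
  have hmajorant := (integrableOn_Ici_iff_integrableOn_Ioi).mpr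
    ((Real.integrableOn_exp_mul_mul_exp_neg_mul_exp hμ hc).const_mul M)
  refine ⟨hmajorant.mono' (by fun_prop) hbound, ?_⟩
  calc _ ≤ ∫ w in Ici 0, M * (Real.exp ((1 - μ) * w) * Real.exp (-(c * Real.exp w))) :=
        norm_integral_le_of_norm_le hmajorant hbound
    _ ≤ M * ((1 / c) ^ (1 - μ) * Real.Gamma (1 - μ)) := by
        rw [integral_const_mul, integral_Ici_eq_integral_Ioi]
        gcongr
        exact Real.integral_exp_mul_mul_exp_neg_mul_exp_le hμ hc
    _ = M * K * ρ ^ (μ - 1) := by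
        rw [show 1 / c = 2 / ω.im * ρ⁻¹ by simp only [c]; field_simp,
          Real.mul_rpow (by positivity) (by positivity), Real.inv_rpow hρ.le,
          ← Real.rpow_neg hρ.le, neg_sub]
        ring
    _ ≤ (M + 1) * K * ρ ^ (μ - 1) := by gcongr; linarith

theorem sommerfeld_integral_origin_estimate
    (ω : ℂ) (hω : 0 < ω.im) (μ : ℝ) (hμ0 : 0 < μ) (hμ1 : μ < 1)
    (M : ℝ) (hM : 0 ≤ M) (φ : ℝ → ℂ) (hmeas : Measurable φ)
    (hφ : ∀ w : ℝ, 0 ≤ w → ‖φ w‖ ≤ M * Real.exp (-μ * w)) :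
    ∃ C > (0 : ℝ), ∀ ρ : ℝ, 0 < ρ → ρ ≤ 1 →
      IntegrableOn (fun w : ℝ =>
        Complex.exp (I * ω * (ρ : ℂ) * Complex.cosh (w : ℂ)) * Complex.cosh (w : ℂ) * φ w)
        (Set.Ici 0) ∧
      ‖∫ w in Set.Ici (0 : ℝ),
        Complex.exp (I * ω * (ρ : ℂ) * Complex.cosh (w : ℂ)) * Complex.cosh (w : ℂ) * φ w‖
      ≤ C * ρ ^ (μ - 1) :=
  sommerfeld_integral_origin_estimate_general ω hω μ hμ1 M hM φ hmeas hφ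
end
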